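/- For each fixed real m ≠ 0, the set {(u,v) ∈ ℝ² : f(m,u,v) = 0 and g(m,u,v) = 0} is finite. Hence, on the branch where det A(m,u,v) = 0, there are only finitely many possible values for the steady-state densities (u,v). -/

import Mathlib

/-!
Eliminating `u` between `f` and `g` leaves their resultant, a polynomial in `v` with leading
coefficient `128 m`; it lies in the ideal `(f, g)`, so every common zero has `v` among its finitely
many roots. For each such `v`, `f(m, ·, v)` is a nonzero polynomial in `u` (its `u²` and constant
coefficients cannot vanish together when `m ≠ 0`), so it leaves finitely many `u`.
-/

/-- The polynomial `f(m,u,v) = (2m − 2v)u² + (3m² − 7mv − 2v²)u + (m³ + 3m²v + 2mv²)`. -/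
noncomputable def fPoly (m u v : ℝ) : ℝ :=
  (2 * m - 2 * v) * u ^ 2 + (3 * m ^ 2 - 7 * m * v - 2 * v ^ 2) * u
    + (m ^ 3 + 3 * m ^ 2 * v + 2 * m * v ^ 2)

/-- The polynomial `g(m,u,v) = (7mu − 3m² − 4mv + 2u² + 4uv)(m + 2v)(m + v)
+ (4mu + 2uv)(3m² − 7mv + 4mu − 2v² − 4uv)`. -/
noncomputable def gPoly (m u v : ℝ) : ℝ :=
  (7 * m * u - 3 * m ^ 2 - 4 * m * v + 2 * u ^ 2 + 4 * u * v) * (m + 2 * v) * (m + v)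
    + (4 * m * u + 2 * u * v)
        * (3 * m ^ 2 - 7 * m * v + 4 * m * u - 2 * v ^ 2 - 4 * u * v)

open Polynomial

theorem Set.Finite.of_forall_isRoot {R : Type*} [CommRing R] [IsDomain R] {S : Set (R × R)}
    {p : R[X]} {q : R → R[X]} (hp : p ≠ 0) (hq : ∀ y, p.IsRoot y → q y ≠ 0)
    (hS : ∀ x ∈ S, p.IsRoot x.2 ∧ (q x.2).IsRoot x.1) : S.Finite := by
  refine ((finite_setOfPred_isRoot hp).biUnion fun y hy =>
    ((finite_setOfPred_isRoot (hq y hy)).image (·, y))).subset ?_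
  rintro ⟨x, y⟩ hxy
  obtain ⟨hy, hx⟩ := hS _ hxy
  exact Set.mem_biUnion hy ⟨x, hx, rfl⟩

noncomputable def fPolyInU (m v : ℝ) : ℝ[X] :=
  C (2 * m - 2 * v) * X ^ 2 + C (3 * m ^ 2 - 7 * m * v - 2 * v ^ 2) * X
    + C (m ^ 3 + 3 * m ^ 2 * v + 2 * m * v ^ 2)

lemma eval_fPolyInU (m u v : ℝ) : (fPolyInU m v).eval u = fPoly m u v := by
  simp [fPolyInU, fPoly]

lemma fPolyInU_ne_zero {m : ℝ} (hm : m ≠ 0) (v : ℝ) : fPolyInU m v ≠ 0 := by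
  intro h
  have h2 := congrArg (coeff · 2) h
  have h0 := congrArg (coeff · 0) h
  simp only [fPolyInU, coeff_add, coeff_C_mul, coeff_X_pow, coeff_X, coeff_C, coeff_zero] at h2 h0
  norm_num at h2 h0
  obtain rfl : v = m := by linarith
  exact hm (pow_eq_zero_iff three_ne_zero |>.mp (by linarith))

/-- The resultant of `f(m, ·, v)` and `g(m, ·, v)`, as a polynomial in `v`. -/
noncomputable def resultantInV (m : ℝ) : ℝ[X] :=
  C (128 * m) * X ^ 9 + C (1984 * m ^ 2) * X ^ 8 + C (5440 * m ^ 3) * X ^ 7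
    + C (-560 * m ^ 4) * X ^ 6 + C (-18440 * m ^ 5) * X ^ 5 + C (-17144 * m ^ 6) * X ^ 4
    + C (7864 * m ^ 7) * X ^ 3 + C (15592 * m ^ 8) * X ^ 2 + C (5008 * m ^ 9) * X
    + C (128 * m ^ 10)

lemma resultantInV_ne_zero {m : ℝ} (hm : m ≠ 0) : resultantInV m ≠ 0 := by
  intro h
  have h9 := congrArg (coeff · 9) h
  simp only [resultantInV, coeff_add, coeff_C_mul, coeff_X_pow, coeff_X, coeff_C,
    coeff_zero] at h9
  norm_num at h9
  exact hm h9

/-- The cofactors are those of the Sylvester matrix of `f` and `g` in `u`. -/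
lemma eval_resultantInV (m u v : ℝ) :
    (resultantInV m).eval v =
      ((64*v^6 + 160*m*v^5 - 368*m^2*v^4 - 1048*m^3*v^3 + 512*m^4*v^2 + 1832*m^5*v
          - 288*m^6) * u
        + (-64*v^7 - 96*m*v^6 + 160*m^2*v^5 - 360*m^3*v^4 - 1172*m^4*v^3 + 1328*m^5*v^2
          + 3100*m^6*v + 128*m^7)) * fPoly m u v
      + ((-32*v^5 - 32*m*v^4 + 136*m^2*v^3 + 128*m^3*v^2 - 232*m^4*v + 32*m^5) * u
        + (-32*v^6 - 224*m*v^5 - 128*m^2*v^4 + 692*m^3*v^3 + 632*m^4*v^2 - 508*m^5*v))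
          * gPoly m u v := by
  simp only [resultantInV, fPoly, gPoly, eval_add, eval_mul, eval_C, eval_pow, eval_X]
  ring

lemma isRoot_resultantInV {m u v : ℝ} (hf : fPoly m u v = 0) (hg : gPoly m u v = 0) :
    (resultantInV m).IsRoot v := by
  rw [IsRoot, eval_resultantInV, hf, hg]
  ring

theorem common_zeros_finite (m : ℝ) (hm : m ≠ 0) :
    {p : ℝ × ℝ | fPoly m p.1 p.2 = 0 ∧ gPoly m p.1 p.2 = 0}.Finite :=
  Set.Finite.of_forall_isRoot (resultantInV_ne_zero hm) (fun v _ => fPolyInU_ne_zero hm v)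
    fun _ ⟨hf, hg⟩ => ⟨isRoot_resultantInV hf hg, by rwa [IsRoot, eval_fPolyInU]⟩
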